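/- Every homogeneous ½-derivation of the planar Galilean conformal algebra W of degree (1̄,1̄,γ) is zero, for every γ ∈ ℤ. -/

import Mathlib

/-- Index type for the basis of the planar Galilean conformal algebra. -/
inductive PGIdx : Type
  | L (m : ℤ) | H (m : ℤ) | I (m : ℤ) | J (m : ℤ)

open PGIdx in
/-- `W` together with a basis `b` satisfying these relations is
the planar Galilean conformal algebra. -/
def IsPlanarGCA (W : Type*) [LieRing W] [LieAlgebra ℂ W]
    (b : Module.Basis PGIdx ℂ W) : Prop :=
  ∀ m n : ℤ,
    ⁅b (L m), b (L n)⁆ = ((m - n : ℤ) : ℂ) • b (L (m + n)) ∧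
    ⁅b (L m), b (H n)⁆ = (-(n : ℂ)) • b (H (m + n)) ∧
    ⁅b (L m), b (I n)⁆ = ((m - n : ℤ) : ℂ) • b (I (m + n)) ∧
    ⁅b (L m), b (J n)⁆ = ((m - n : ℤ) : ℂ) • b (J (m + n)) ∧
    ⁅b (H m), b (I n)⁆ = b (J (m + n)) ∧
    ⁅b (H m), b (J n)⁆ = -b (I (m + n)) ∧
    ⁅b (H m), b (H n)⁆ = 0 ∧
    ⁅b (I m), b (I n)⁆ = 0 ∧
    ⁅b (I m), b (J n)⁆ = 0 ∧
    ⁅b (J m), b (J n)⁆ = 0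

/-- `φ` is a ½-derivation. -/
def IsHalfDerivation {W : Type*} [LieRing W] [LieAlgebra ℂ W]
    (φ : W →ₗ[ℂ] W) : Prop :=
  ∀ x y : W, φ ⁅x, y⁆ = (2 : ℂ)⁻¹ • (⁅φ x, y⁆ + ⁅x, φ y⁆)


/-!
The degree forces `D` to send each of the families `L, H, I, J` to multiples of a single basis
vector, so the ½-derivation identity on each bracket relation becomes a scalar equation between
the coefficients. On `⁅L 0, H n⁆` and `⁅L 1, H γ⁆` it kills the coefficients of `D` on `H`
(the second because `1 - 2γ` is odd); then `⁅H 0, I n⁆` and `⁅H 0, J n⁆` give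
`q = -p/2` and `p = -q/2`, so `D` vanishes on `I` and `J`; finally `⁅L m, I 0⁆` kills the
coefficients on `L`.
-/

open PGIdx

section HalfDerivation

variable {W : Type*} [LieRing W] [LieAlgebra ℂ W] {D : W →ₗ[ℂ] W}

theorem IsHalfDerivation.mul_eq_of_lie_eq_smul (hD : IsHalfDerivation D) {x y z w : W}
    {a c α β : ℂ} (hxy : ⁅x, y⁆ = a • z) (hz : D z = c • w) (hDx : ⁅D x, y⁆ = α • w)
    (hDy : ⁅x, D y⁆ = β • w) (hw : w ≠ 0) : a * c = 2⁻¹ * (α + β) := by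
  apply smul_left_injective ℂ hw
  have h := hD x y
  rw [hxy, map_smul, hz, hDx, hDy, smul_smul, ← add_smul, smul_smul] at h
  exact h

end HalfDerivation

namespace IsPlanarGCA

variable {W : Type*} [LieRing W] [LieAlgebra ℂ W] {b : Module.Basis PGIdx ℂ W}

theorem lie_L_L (hW : IsPlanarGCA W b) (m n : ℤ) :
    ⁅b (L m), b (L n)⁆ = ((m - n : ℤ) : ℂ) • b (L (m + n)) := (hW m n).1

theorem lie_L_H (hW : IsPlanarGCA W b) (m n : ℤ) :
    ⁅b (L m), b (H n)⁆ = (-(n : ℂ)) • b (H (m + n)) := (hW m n).2.1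

theorem lie_L_I (hW : IsPlanarGCA W b) (m n : ℤ) :
    ⁅b (L m), b (I n)⁆ = ((m - n : ℤ) : ℂ) • b (I (m + n)) := (hW m n).2.2.1

theorem lie_H_I (hW : IsPlanarGCA W b) (m n : ℤ) : ⁅b (H m), b (I n)⁆ = b (J (m + n)) :=
  (hW m n).2.2.2.2.1

theorem lie_H_J (hW : IsPlanarGCA W b) (m n : ℤ) : ⁅b (H m), b (J n)⁆ = -b (I (m + n)) :=
  (hW m n).2.2.2.2.2.1

theorem lie_H_H (hW : IsPlanarGCA W b) (m n : ℤ) : ⁅b (H m), b (H n)⁆ = 0 :=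
  (hW m n).2.2.2.2.2.2.1

end IsPlanarGCA

theorem eq_zero_of_neg_mul_eq (γ : ℤ) (g : ℤ → ℂ)
    (h : ∀ m n : ℤ, -(n : ℂ) * g (m + n) = 2⁻¹ * (((m - (n + γ) : ℤ) : ℂ) * g n)) (n : ℤ) :
    g n = 0 := by
  have off_diag : ∀ n ≠ γ, g n = 0 := by
    intro n hn
    have h0 := h 0 n
    rw [zero_add] at h0
    push_cast at h0
    have hγn : (γ : ℂ) - n ≠ 0 := sub_ne_zero.mpr (by exact_mod_cast hn.symm)
    exact (mul_eq_zero.mp (by linear_combination 2 * h0 : g n * ((γ : ℂ) - n) = 0)).resolve_right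
      hγn
  rcases eq_or_ne n γ with rfl | hn
  · have h1 := h 1 n
    rw [off_diag (1 + n) (by omega)] at h1
    have hodd : ((1 - (n + n) : ℤ) : ℂ) ≠ 0 := by exact_mod_cast (by omega : 1 - (n + n) ≠ 0)
    exact (mul_eq_zero.mp (by linear_combination -2 * h1 :
      ((1 - (n + n) : ℤ) : ℂ) * g n = 0)).resolve_left hodd
  · exact off_diag n hn

section Coefficients

variable {W : Type*} [LieRing W] [LieAlgebra ℂ W] {b : Module.Basis PGIdx ℂ W}
  {D : W →ₗ[ℂ] W} {γ : ℤ} {f g p q : ℤ → ℂ}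

theorem coeff_H_eq_zero (hW : IsPlanarGCA W b) (hD : IsHalfDerivation D)
    (hf : ∀ m, D (b (L m)) = f m • b (H (m + γ))) (hg : ∀ m, D (b (H m)) = g m • b (L (m + γ)))
    (n : ℤ) : g n = 0 := by
  refine eq_zero_of_neg_mul_eq γ g (fun m n => ?_) n
  have h := hD.mul_eq_of_lie_eq_smul (hW.lie_L_H m n) (hg (m + n)) (α := 0)
    (by rw [hf, smul_lie, hW.lie_H_H, smul_zero, zero_smul])
    (by rw [hg, lie_smul, hW.lie_L_L, smul_smul, ← add_assoc]) (b.ne_zero _)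
  linear_combination h

theorem coeff_I_eq_zero_and_coeff_J_eq_zero (hW : IsPlanarGCA W b) (hD : IsHalfDerivation D)
    (hH : ∀ m, D (b (H m)) = 0) (hp : ∀ m, D (b (I m)) = p m • b (J (m + γ)))
    (hq : ∀ m, D (b (J m)) = q m • b (I (m + γ))) (n : ℤ) : p n = 0 ∧ q n = 0 := by
  have hHI : ⁅b (H 0), b (I n)⁆ = (1 : ℂ) • b (J n) := by rw [hW.lie_H_I, zero_add, one_smul]
  have hHJ : ⁅b (H 0), b (J n)⁆ = (-1 : ℂ) • b (I n) := by
    rw [hW.lie_H_J, zero_add, neg_one_smul]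
  have hq_p : 1 * q n = 2⁻¹ * (0 + -p n) :=
    hD.mul_eq_of_lie_eq_smul hHI (hq n) (by rw [hH, zero_lie, zero_smul])
      (by rw [hp, lie_smul, hW.lie_H_J, zero_add, smul_neg, neg_smul]) (b.ne_zero _)
  have hp_q : -1 * p n = 2⁻¹ * (0 + q n) :=
    hD.mul_eq_of_lie_eq_smul hHJ (hp n) (by rw [hH, zero_lie, zero_smul])
      (by rw [hq, lie_smul, hW.lie_H_I, zero_add]) (b.ne_zero _)
  have hpn : p n = 0 := by linear_combination (-4 / 3 : ℂ) * hp_q - (2 / 3 : ℂ) * hq_p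
  exact ⟨hpn, by linear_combination hq_p - 2⁻¹ * hpn⟩

theorem coeff_L_eq_zero (hW : IsPlanarGCA W b) (hD : IsHalfDerivation D)
    (hf : ∀ m, D (b (L m)) = f m • b (H (m + γ))) (hI : ∀ m, D (b (I m)) = 0) (m : ℤ) :
    f m = 0 := by
  have h := hD.mul_eq_of_lie_eq_smul (hW.lie_L_I m 0) (c := 0) (w := b (J (m + γ)))
    (by rw [hI, zero_smul]) (by rw [hf, smul_lie, hW.lie_H_I, add_zero])
    (β := 0) (by rw [hI, lie_zero, zero_smul]) (b.ne_zero _)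
  linear_combination -2 * h

end Coefficients

theorem homogeneous_half_derivation_deg11_is_zero
    (W : Type*) [LieRing W] [LieAlgebra ℂ W]
    (b : Module.Basis PGIdx ℂ W) (hW : IsPlanarGCA W b)
    (γ : ℤ)
    (D : W →ₗ[ℂ] W) (hD : IsHalfDerivation D)
    (hL : ∀ m : ℤ, ∃ c : ℂ, D (b (L m)) = c • b (H (m + γ)))
    (hH : ∀ m : ℤ, ∃ c : ℂ, D (b (H m)) = c • b (L (m + γ)))
    (hI : ∀ m : ℤ, ∃ c : ℂ, D (b (I m)) = c • b (J (m + γ)))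
    (hJ : ∀ m : ℤ, ∃ c : ℂ, D (b (J m)) = c • b (I (m + γ))) :
    D = 0 := by
  choose f hf using hL
  choose g hg using hH
  choose p hp using hI
  choose q hq using hJ
  have hDH : ∀ m, D (b (H m)) = 0 := fun m => by
    rw [hg, coeff_H_eq_zero hW hD hf hg, zero_smul]
  have hIJ := coeff_I_eq_zero_and_coeff_J_eq_zero hW hD hDH hp hq
  have hDI : ∀ m, D (b (I m)) = 0 := fun m => by rw [hp, (hIJ m).1, zero_smul]
  refine b.ext fun i => ?_
  cases i with
  | L m => rw [hf, coeff_L_eq_zero hW hD hf hDI, zero_smul, LinearMap.zero_apply]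
  | H m => rw [hDH, LinearMap.zero_apply]
  | I m => rw [hDI, LinearMap.zero_apply]
  | J m => rw [hq, (hIJ m).2, zero_smul, LinearMap.zero_apply]
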